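/- (Theorem 1) The weak XYZ Conjecture implies that the insulator is a semi-height on 𝔛: if for every δ > 0 there are only finitely many (A,B,C) ∈ 𝔛 satisfying log max{|A|,|B|,|C|} > δ · P⁺(ABC), then for every real number X > 0 the set of (A,B,C) ∈ 𝔛 with 𝔦(ABC) < X is finite. -/

import Mathlib

open Filter

/-!
Since `ABC · 𝔦(ABC)` is insulated, the primorial `P#` of `P = P⁺(ABC)` divides it, so
`P# ≤ H³ 𝔦(ABC) < H³ X` with `H` the height. Off the finite exceptional set of the weak
XYZ conjecture `log H ≤ δ P`, so `log P# ≤ 3 δ P + log X`. Chebyshev's bound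
`log P# ≥ (log 2 - o(1)) P` with `3 δ < log 2` then bounds `P`, hence `H`, and only finitely many
triples remain.
-/

/-- `(A,B,C)` is a primitive non-cuspidal solution to `A + B + C = 0`. -/
def IsABC (A B C : ℤ) : Prop :=
  A + B + C = 0 ∧ Int.gcd (Int.gcd A B) C = 1 ∧ A * B * C ≠ 0

/-- The height `H(A,B,C) = max {|A|, |B|, |C|}`. -/
def height (A B C : ℤ) : ℤ := max |A| (max |B| |C|)

/-- The radical of a nonzero integer: its largest squarefree divisor,
the product of the distinct primes dividing it. -/
def rad (n : ℤ) : ℕ := ∏ p ∈ n.natAbs.primeFactors, p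

/-- `P⁺(n)`: the largest prime divisor of `n`, or `1` if `|n| = 1`. -/
def Pplus (n : ℤ) : ℕ := max (n.natAbs.primeFactors.sup id) 1

/-- A nonzero integer `m` is insulated if every prime `p ≤ P⁺(m)` divides `m`. -/
def Insulated (m : ℤ) : Prop :=
  m ≠ 0 ∧ ∀ p : ℕ, p.Prime → p ≤ Pplus m → (p : ℤ) ∣ m

/-- The insulator `𝔦(n)`: the smallest positive integer `I` such that `n * I` is insulated. -/
noncomputable def insulator (n : ℤ) : ℕ := sInf {I : ℕ | 0 < I ∧ Insulated (n * I)}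

open Asymptotics Real

lemma le_Pplus {p : ℕ} {n : ℤ} (hp : p.Prime) (hpn : (p : ℤ) ∣ n) (hn : n ≠ 0) :
    p ≤ Pplus n := by
  have hmem : p ∈ n.natAbs.primeFactors :=
    Nat.mem_primeFactors.mpr ⟨hp, Int.natCast_dvd.mp hpn, Int.natAbs_ne_zero.mpr hn⟩
  exact (Finset.le_sup (f := id) hmem).trans (le_max_left _ _)

lemma Pplus_le {n : ℤ} {B : ℕ} (hB : 1 ≤ B) (h : ∀ p : ℕ, p.Prime → (p : ℤ) ∣ n → p ≤ B) :
    Pplus n ≤ B := by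
  refine max_le (Finset.sup_le fun p hp => ?_) hB
  rw [Nat.mem_primeFactors] at hp
  exact h p hp.1 (Int.natCast_dvd.mpr hp.2.1)

lemma Pplus_le_Pplus_of_dvd {m n : ℤ} (hmn : m ∣ n) (hn : n ≠ 0) : Pplus m ≤ Pplus n :=
  Pplus_le (le_max_right _ _) fun _ hp hpm => le_Pplus hp (hpm.trans hmn) hn

lemma Insulated.primorial_dvd {m : ℤ} (hm : Insulated m) : primorial (Pplus m) ∣ m.natAbs := by
  refine Finset.prod_primes_dvd _ (fun p hp => (Finset.mem_filter.mp hp).2.prime) fun p hp => ?_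
  rw [Finset.mem_filter, Finset.mem_range] at hp
  exact Int.natCast_dvd.mp (hm.2 p hp.2 (Nat.lt_succ_iff.mp hp.1))

lemma insulated_mul_primorial_Pplus {n : ℤ} (hn : n ≠ 0) :
    Insulated (n * primorial (Pplus n)) := by
  have hprime_dvd_iff {q : ℕ} (hq : q.Prime) : q ∣ primorial (Pplus n) ↔ q ≤ Pplus n := by
    rw [← (Nat.mem_primesLE.trans (and_iff_left hq)), ← primeFactors_primorial,
      Nat.mem_primeFactors_of_ne_zero (primorial_ne_zero _)]
    exact (and_iff_right hq).symm
  have hPplus : Pplus (n * primorial (Pplus n)) ≤ Pplus n := by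
    refine Pplus_le (le_max_right _ _) fun q hq hqd => ?_
    rcases (Nat.prime_iff_prime_int.mp hq).dvd_mul.mp hqd with hqn | hqprim
    · exact le_Pplus hq hqn hn
    · exact (hprime_dvd_iff hq).mp (Int.natCast_dvd_natCast.mp hqprim)
  refine ⟨mul_ne_zero hn (Nat.cast_ne_zero.mpr (primorial_ne_zero _)), fun p hp hple => ?_⟩
  exact dvd_mul_of_dvd_right
    (Int.natCast_dvd_natCast.mpr ((hprime_dvd_iff hp).mpr (hple.trans hPplus))) n

lemma insulator_spec {n : ℤ} (hn : n ≠ 0) : 0 < insulator n ∧ Insulated (n * insulator n) :=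
  Nat.sInf_mem (s := {I : ℕ | 0 < I ∧ Insulated (n * I)})
    ⟨_, primorial_pos _, insulated_mul_primorial_Pplus hn⟩

lemma primorial_Pplus_le_natAbs_mul_insulator {n : ℤ} (hn : n ≠ 0) :
    primorial (Pplus n) ≤ n.natAbs * insulator n := by
  obtain ⟨hpos, hins⟩ := insulator_spec hn
  calc primorial (Pplus n) ≤ primorial (Pplus (n * insulator n)) :=
        primorial_mono (Pplus_le_Pplus_of_dvd (dvd_mul_right _ _) hins.1)
    _ ≤ (n * insulator n).natAbs :=
        Nat.le_of_dvd (Int.natAbs_pos.mpr hins.1) hins.primorial_dvd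
    _ = n.natAbs * insulator n := by rw [Int.natAbs_mul, Int.natAbs_natCast]

lemma abs_le_height_left (A B C : ℤ) : |A| ≤ height A B C := le_max_left _ _

lemma abs_le_height_mid (A B C : ℤ) : |B| ≤ height A B C :=
  (le_max_left _ _).trans (le_max_right _ _)

lemma abs_le_height_right (A B C : ℤ) : |C| ≤ height A B C :=
  (le_max_right _ _).trans (le_max_right _ _)

lemma height_pos {A B C : ℤ} (h : A * B * C ≠ 0) : 0 < height A B C :=
  (abs_pos.mpr (left_ne_zero_of_mul (left_ne_zero_of_mul h))).trans_le (abs_le_height_left A B C)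

lemma abs_mul_mul_le_height_pow (A B C : ℤ) : |A * B * C| ≤ height A B C ^ 3 := by
  have hH : 0 ≤ height A B C := (abs_nonneg A).trans (abs_le_height_left A B C)
  rw [abs_mul, abs_mul, pow_three, ← mul_assoc]
  exact mul_le_mul (mul_le_mul (abs_le_height_left A B C) (abs_le_height_mid A B C)
    (abs_nonneg B) hH) (abs_le_height_right A B C) (abs_nonneg C) (mul_nonneg hH hH)

lemma finite_setOf_height_le (M : ℤ) :
    {t : ℤ × ℤ × ℤ | height t.1 t.2.1 t.2.2 ≤ M}.Finite := by
  refine ((Set.finite_Icc (-M) M).prod ((Set.finite_Icc (-M) M).prod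
    (Set.finite_Icc (-M) M))).subset fun ⟨A, B, C⟩ h => ?_
  exact ⟨abs_le.mp ((abs_le_height_left A B C).trans h),
    abs_le.mp ((abs_le_height_mid A B C).trans h), abs_le.mp ((abs_le_height_right A B C).trans h)⟩

lemma log_primorial_Pplus_le {A B C : ℤ} (h : A * B * C ≠ 0) :
    log (primorial (Pplus (A * B * C))) ≤
      3 * log (height A B C) + log (insulator (A * B * C)) := by
  have hH : (0 : ℝ) < height A B C := Int.cast_pos.mpr (height_pos h)
  have hprim :
      (primorial (Pplus (A * B * C)) : ℝ) ≤ (height A B C : ℝ) ^ 3 * insulator (A * B * C) := by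
    have habs : ((A * B * C).natAbs : ℝ) ≤ (height A B C : ℝ) ^ 3 := by
      rw [Nat.cast_natAbs]; exact_mod_cast abs_mul_mul_le_height_pow A B C
    calc (primorial (Pplus (A * B * C)) : ℝ) ≤ (A * B * C).natAbs * insulator (A * B * C) := by
          exact_mod_cast primorial_Pplus_le_natAbs_mul_insulator h
      _ ≤ _ := by gcongr
  calc log (primorial (Pplus (A * B * C)))
      ≤ log ((height A B C : ℝ) ^ 3 * insulator (A * B * C)) :=
        log_le_log (by exact_mod_cast primorial_pos _) hprim
    _ = 3 * log (height A B C) + log (insulator (A * B * C)) := by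
        have hins : (insulator (A * B * C) : ℝ) ≠ 0 := by exact_mod_cast (insulator_spec h).1.ne'
        rw [log_mul (by positivity) hins, log_pow, Nat.cast_ofNat]

lemma isLittleO_log_add_one_add_sqrt_mul_log :
    (fun x : ℝ => log (x + 1) + 2 * √x * log x) =o[atTop] id := by
  have hlog_add_one : (fun x : ℝ => log (x + 1)) =o[atTop] id := by
    refine (isLittleO_log_id_atTop.comp_tendsto
      (tendsto_atTop_add_const_right atTop (1 : ℝ) tendsto_id)).trans_isBigO ?_
    refine IsBigO.of_bound 2 ?_
    filter_upwards [eventually_ge_atTop 1] with x hx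
    simp only [Function.comp, id, norm_of_nonneg (by linarith : (0:ℝ) ≤ x),
      norm_of_nonneg (by linarith : (0:ℝ) ≤ x + 1)]
    linarith
  have hsqrt_mul_log : (fun x : ℝ => 2 * √x * log x) =o[atTop] id := by
    have hlog : log =o[atTop] (fun x : ℝ => √x) := by
      simpa only [sqrt_eq_rpow] using isLittleO_log_rpow_atTop (by norm_num : (0:ℝ) < 1 / 2)
    refine ((isBigO_refl (fun x : ℝ => 2 * √x) atTop).mul_isLittleO hlog).trans_isBigO ?_
    refine IsBigO.of_bound 2 ?_
    filter_upwards [eventually_ge_atTop 0] with x hx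
    rw [mul_assoc, mul_self_sqrt hx, norm_mul, id, Real.norm_two]
  exact hlog_add_one.add hsqrt_mul_log

lemma tendsto_log_primorial_sub_mul_atTop {c : ℝ} (hc : c < log 2) :
    Tendsto (fun n : ℕ => log (primorial n) - c * n) atTop atTop := by
  have herr := (isLittleO_log_add_one_add_sqrt_mul_log.comp_tendsto
    tendsto_natCast_atTop_atTop).def (half_pos (sub_pos.mpr hc))
  refine tendsto_atTop_mono' _ ?_
    ((tendsto_natCast_atTop_atTop (R := ℝ)).const_mul_atTop (half_pos (sub_pos.mpr hc)))
  filter_upwards [herr] with n hn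
  have htheta := Chebyshev.theta_ge n
  rw [Chebyshev.theta_eq_log_primorial, Nat.floor_natCast] at htheta
  simp only [Function.comp, id, Real.norm_eq_abs, Nat.abs_cast] at hn
  linarith [le_abs_self (log (n + 1) + 2 * √n * log n)]

/-- Theorem 1: the weak XYZ Conjecture implies that the insulator is a semi-height on 𝔛. -/
theorem weak_xyz_implies_insulator_semiheight
    (hweak : ∀ δ : ℝ, 0 < δ →
      {t : ℤ × ℤ × ℤ | IsABC t.1 t.2.1 t.2.2 ∧
        Real.log ((height t.1 t.2.1 t.2.2 : ℤ) : ℝ) >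
          δ * ((Pplus (t.1 * t.2.1 * t.2.2) : ℕ) : ℝ)}.Finite) :
    ∀ X : ℝ, 0 < X →
      {t : ℤ × ℤ × ℤ | IsABC t.1 t.2.1 t.2.2 ∧
        ((insulator (t.1 * t.2.1 * t.2.2) : ℕ) : ℝ) < X}.Finite := by
  intro X _
  obtain ⟨δ, hδ, h3δ⟩ : ∃ δ : ℝ, 0 < δ ∧ 3 * δ < log 2 :=
    ⟨log 2 / 6, by positivity, by linarith [log_pos one_lt_two]⟩
  obtain ⟨N, hN⟩ := eventually_atTop.mp
    ((tendsto_log_primorial_sub_mul_atTop h3δ).eventually_gt_atTop (log X))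
  refine ((hweak δ hδ).union (finite_setOf_height_le ⌊exp (δ * N)⌋)).subset ?_
  rintro ⟨A, B, C⟩ ⟨habc, hins⟩
  refine or_iff_not_imp_left.mpr fun hlarge => ?_
  have hlogH : log (height A B C) ≤ δ * Pplus (A * B * C) := not_lt.mp (hlarge ⟨habc, ·⟩)
  have hPplus : Pplus (A * B * C) < N := by
    by_contra! hNP
    have hchebyshev := hN _ hNP
    have hprimorial := log_primorial_Pplus_le habc.2.2
    have hlogI := log_lt_log (by exact_mod_cast (insulator_spec habc.2.2).1) hins
    linarith
  refine Int.le_floor.mpr ((log_le_iff_le_exp (Int.cast_pos.mpr (height_pos habc.2.2))).mp ?_)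
  exact hlogH.trans (by gcongr)
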